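/- Let 𝒟 be a triangulated category and let 𝒟^{≥0} and 𝒟^{≤0} be full subcategories closed under isomorphisms, and set 𝒟^{≥n} = 𝒟^{≥0}[n], 𝒟^{≤n} = 𝒟^{≤0}[n]. Assume: (1) 𝒟^{≥0} is closed under extensions and under the shift [1], and 𝒟^{≤0} is closed under extensions and under the shift [−1]; (2) every object of 𝒟 lies in 𝒟^{≥n} for some integer n; (3) Hom(X, Y) = 0 for all X ∈ 𝒟^{≥0} and Y ∈ 𝒟^{≤−1}; (4) for every X ∈ 𝒟^{≥0} there exists X₀ ∈ 𝒟^{≥0} ∩ 𝒟^{≤0} and a morphism X → X₀ whose fiber (i.e., the third object F in a distinguished triangle F → X → X₀ → F[1]) lies in 𝒟^{≥1}. Then the pair (𝒟^{≥0}, 𝒟^{≤0}) defines a t-structure on 𝒟; in particular, for every object X there is a distinguished triangle X_{≥0} → X → X_{≤−1} → X_{≥0}[1] with X_{≥0} ∈ 𝒟^{≥0} and X_{≤−1} ∈ 𝒟^{≤−1}. -/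

import Mathlib

open CategoryTheory CategoryTheory.Limits CategoryTheory.Pretriangulated

/-!
Truncations are built by induction on `k ≥ 1` for objects `X ∈ 𝒟^{≥-k}`. Condition (4), shifted,
gives a triangle `F → X → Y → F[1]` with `F ∈ 𝒟^{≥-k+1}` and `Y ∈ 𝒟^{≤-k}`; by induction `F` has
a truncation `A → F → B → A[1]`, and `A → X` is a truncation of `X` because its cone is an
extension of `Y` by `B`. The octahedral axiom is not available in a pretriangulated category;
instead one takes the cone `E` of `Y[-1] → F → B`, which is such an extension, and Hom-vanishing
between `A`, `F` and `Y[-1]` shows that the fiber of the induced map `X → E` is `A`.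
-/

namespace CategoryTheory.Pretriangulated

open Category Preadditive

variable {D : Type*} [Category D] [Preadditive D] [HasZeroObject D] [HasShift D ℤ]
  [∀ n : ℤ, (shiftFunctor D n).Additive] [Pretriangulated D]

lemma distTriang_of_iso₂ (T : Triangle D) (hT : T ∈ distTriang D) {X : D} (e : T.obj₂ ≅ X) :
    Triangle.mk (T.mor₁ ≫ e.hom) (e.inv ≫ T.mor₂) T.mor₃ ∈ distTriang D :=
  isomorphic_distinguished _ hT _
    (Triangle.isoMk _ _ (Iso.refl _) e.symm (Iso.refl _) (by simp [Triangle.mk])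
      (by simp [Triangle.mk]) (by simp [Triangle.mk]))

lemma eq_zero_of_idempotent_of_distTriang {C F X B E A' : D}
    {w : C ⟶ F} {f : F ⟶ X} {e : X ⟶ C⟦(1 : ℤ)⟧} {δ : C ⟶ B} {i : B ⟶ E} {j : E ⟶ C⟦(1 : ℤ)⟧}
    {u : A' ⟶ X} {v : X ⟶ E} {k : E ⟶ A'⟦(1 : ℤ)⟧}
    (h₂ : Triangle.mk w f e ∈ distTriang D) (h₃ : Triangle.mk δ i j ∈ distTriang D)
    (h₄ : Triangle.mk u v k ∈ distTriang D) (hvj : v ≫ j = e)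
    (hFC : ∀ g : F ⟶ C, g = 0)
    {ε : A' ⟶ A'} (hεε : ε ≫ ε = ε) (hεu : ε ≫ u = 0) (hikε : i ≫ k ≫ ε⟦(1 : ℤ)⟧' = 0) :
    ε = 0 := by
  -- `ε⟦1⟧` factors as `A'⟦1⟧ → C⟦1⟧ → F⟦1⟧ → A'⟦1⟧`, and `F⟦1⟧ → A'⟦1⟧ → C⟦1⟧` vanishes,
  -- so `ε⟦1⟧ = ε⟦1⟧ ≫ ε⟦1⟧ = 0`.
  apply (shiftFunctor D (1 : ℤ)).map_injective
  rw [Functor.map_zero]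
  have hε' : ε⟦(1 : ℤ)⟧' ≫ ε⟦(1 : ℤ)⟧' = ε⟦(1 : ℤ)⟧' := by rw [← Functor.map_comp, hεε]
  obtain ⟨t, ht⟩ : ∃ t : A'⟦(1 : ℤ)⟧ ⟶ E, ε⟦(1 : ℤ)⟧' = t ≫ k :=
    Triangle.coyoneda_exact₁ _ h₄ _
      (show ε⟦(1 : ℤ)⟧' ≫ u⟦(1 : ℤ)⟧' = 0 by rw [← Functor.map_comp, hεu, Functor.map_zero])
  obtain ⟨G, hG⟩ : ∃ G : C⟦(1 : ℤ)⟧ ⟶ A'⟦(1 : ℤ)⟧, k ≫ ε⟦(1 : ℤ)⟧' = j ≫ G :=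
    Triangle.yoneda_exact₃ _ h₃ _ hikε
  have hvk : v ≫ k = 0 := comp_distTriang_mor_zero₂₃ _ h₄
  obtain ⟨G', hG'⟩ : ∃ G' : F⟦(1 : ℤ)⟧ ⟶ A'⟦(1 : ℤ)⟧, G = (-w⟦(1 : ℤ)⟧') ≫ G' :=
    Triangle.yoneda_exact₃ _ (rot_of_distTriang _ h₂) G (show e ≫ G = 0 by
      rw [← hvj, assoc, ← hG, ← assoc, hvk, zero_comp])
  have hfactor : ε⟦(1 : ℤ)⟧' = (t ≫ j) ≫ (-w⟦(1 : ℤ)⟧') ≫ G' := by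
    rw [← hG', assoc, ← hG, ← assoc, ← ht, hε']
  calc ε⟦(1 : ℤ)⟧' = ε⟦(1 : ℤ)⟧' ≫ ε⟦(1 : ℤ)⟧' := hε'.symm
    _ = (t ≫ j) ≫ (-w⟦(1 : ℤ)⟧') ≫ (G' ≫ t ≫ j) ≫ (-w⟦(1 : ℤ)⟧') ≫ G' := by
      conv_lhs => rw [hfactor]
      simp only [assoc]
    _ = 0 := by
      have hFC' : G' ≫ t ≫ j = 0 := by
        rw [← (shiftFunctor D (1 : ℤ)).map_preimage (G' ≫ t ≫ j),
          hFC ((shiftFunctor D (1 : ℤ)).preimage _), Functor.map_zero]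
      rw [hFC', zero_comp, comp_zero, comp_zero]

lemma exists_retraction_of_distTriang {A F B C X E A' : D}
    {a : A ⟶ F} {p : F ⟶ B} {r : B ⟶ A⟦(1 : ℤ)⟧} {w : C ⟶ F} {f : F ⟶ X} {e : X ⟶ C⟦(1 : ℤ)⟧}
    {i : B ⟶ E} {j : E ⟶ C⟦(1 : ℤ)⟧} {u : A' ⟶ X} {v : X ⟶ E} {k : E ⟶ A'⟦(1 : ℤ)⟧}
    (h₁ : Triangle.mk a p r ∈ distTriang D) (h₂ : Triangle.mk w f e ∈ distTriang D)
    (h₃ : Triangle.mk (w ≫ p) i j ∈ distTriang D) (h₄ : Triangle.mk u v k ∈ distTriang D)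
    (hfv : f ≫ v = p ≫ i) (hvj : v ≫ j = e)
    (hAC : ∀ g : A ⟶ C, g = 0) (hAB : ∀ g : A⟦(1 : ℤ)⟧ ⟶ B, g = 0)
    {α : A ⟶ A'} (hαu : a ≫ f = α ≫ u) :
    ∃ β : A' ⟶ A, α ≫ β = 𝟙 A ∧ (𝟙 A' - β ≫ α) ≫ u = 0 := by
  have huv : u ≫ v = 0 := comp_distTriang_mor_zero₁₂ _ h₄
  have hwf : w ≫ f = 0 := comp_distTriang_mor_zero₁₂ _ h₂
  obtain ⟨l, hl⟩ : ∃ l : A' ⟶ F, u = l ≫ f :=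
    Triangle.coyoneda_exact₃ _ h₂ u (show u ≫ e = 0 by rw [← hvj, ← assoc, huv, zero_comp])
  obtain ⟨c, hc⟩ : ∃ c : A' ⟶ C, l ≫ p = c ≫ w ≫ p :=
    Triangle.coyoneda_exact₂ _ h₃ (l ≫ p)
      (show (l ≫ p) ≫ i = 0 by rw [assoc, ← hfv, ← assoc, ← hl, huv])
  obtain ⟨β, hβ⟩ : ∃ β : A' ⟶ A, l - c ≫ w = β ≫ a :=
    Triangle.coyoneda_exact₂ _ h₁ _
      (show (l - c ≫ w) ≫ p = 0 by rw [sub_comp, assoc, hc, sub_self])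
  have hαl : α ≫ l = a := by
    obtain ⟨d, hd⟩ : ∃ d : A ⟶ C, α ≫ l - a = d ≫ w :=
      Triangle.coyoneda_exact₂ _ h₂ _
        (show (α ≫ l - a) ≫ f = 0 by rw [sub_comp, assoc, ← hl, hαu, sub_self])
    rwa [hAC d, zero_comp, sub_eq_zero] at hd
  refine ⟨β, ?_, ?_⟩
  · have hβa : (α ≫ β - 𝟙 A) ≫ a = 0 := by
      rw [sub_comp, assoc, ← hβ, comp_sub, hαl, ← assoc, hAC (α ≫ c), zero_comp, sub_zero,
        id_comp, sub_self]
    obtain ⟨s, hs⟩ : ∃ s : A⟦(1 : ℤ)⟧ ⟶ B, (α ≫ β - 𝟙 A)⟦(1 : ℤ)⟧' = s ≫ r :=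
      Triangle.coyoneda_exact₁ _ h₁ _ (show (α ≫ β - 𝟙 A)⟦(1 : ℤ)⟧' ≫ a⟦(1 : ℤ)⟧' = 0 by
        rw [← Functor.map_comp, hβa, Functor.map_zero])
    rw [hAB s, zero_comp, ← (shiftFunctor D (1 : ℤ)).map_zero] at hs
    exact sub_eq_zero.mp ((shiftFunctor D (1 : ℤ)).map_injective hs)
  · rw [sub_comp, id_comp, assoc, ← hαu, ← assoc, ← hβ, sub_comp, assoc, hwf, comp_zero,
      sub_zero, ← hl, sub_self]

lemma exists_distTriang_comp_of_hom_eq_zero {A F B C X : D}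
    {a : A ⟶ F} {p : F ⟶ B} {r : B ⟶ A⟦(1 : ℤ)⟧} {w : C ⟶ F} {f : F ⟶ X} {e : X ⟶ C⟦(1 : ℤ)⟧}
    (h₁ : Triangle.mk a p r ∈ distTriang D) (h₂ : Triangle.mk w f e ∈ distTriang D)
    (hAC : ∀ g : A ⟶ C, g = 0) (hAB : ∀ g : A⟦(1 : ℤ)⟧ ⟶ B, g = 0)
    (hFC : ∀ g : F ⟶ C, g = 0) :
    ∃ (E : D) (v : X ⟶ E) (k : E ⟶ A⟦(1 : ℤ)⟧) (i : B ⟶ E) (j : E ⟶ C⟦(1 : ℤ)⟧)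
      (l : C⟦(1 : ℤ)⟧ ⟶ B⟦(1 : ℤ)⟧),
      Triangle.mk (a ≫ f) v k ∈ distTriang D ∧ Triangle.mk i j l ∈ distTriang D := by
  obtain ⟨E, i, j, h₃⟩ := distinguished_cocone_triangle (w ≫ p)
  obtain ⟨v, hfv, hvj⟩ : ∃ v : X ⟶ E, f ≫ v = p ≫ i ∧ e ≫ (𝟙 C)⟦(1 : ℤ)⟧' = v ≫ j :=
    complete_distinguished_triangle_morphism _ _ h₂ h₃ (𝟙 C) p (id_comp _).symm
  replace hvj : v ≫ j = e := by rw [← hvj, Functor.map_id, comp_id]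
  obtain ⟨A', u, k, h₄⟩ := distinguished_cocone_triangle₁ v
  obtain ⟨α, hαu, hrα⟩ : ∃ α : A ⟶ A', a ≫ f = α ≫ u ∧ r ≫ α⟦(1 : ℤ)⟧' = i ≫ k :=
    complete_distinguished_triangle_morphism₁ _ _ h₁ h₄ f i hfv.symm
  obtain ⟨β, hαβ, hεu⟩ := exists_retraction_of_distTriang h₁ h₂ h₃ h₄ hfv hvj hAC hAB hαu
  have hβα : 𝟙 A' - β ≫ α = 0 := by
    refine eq_zero_of_idempotent_of_distTriang h₂ h₃ h₄ hvj hFC ?_ hεu ?_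
    · simp only [sub_comp, comp_sub, id_comp, comp_id, assoc, reassoc_of% hαβ, sub_self, sub_zero]
    · rw [← assoc, ← hrα, assoc, ← Functor.map_comp, comp_sub, comp_id, reassoc_of% hαβ,
        sub_self, Functor.map_zero, comp_zero]
  let eα : A ≅ A' := ⟨α, β, hαβ, (sub_eq_zero.mp hβα).symm⟩
  refine ⟨E, v, k ≫ eα.inv⟦(1 : ℤ)⟧', i, j, _, ?_, rot_of_distTriang _ h₃⟩
  refine isomorphic_distinguished _ h₄ _ (Triangle.isoMk _ _ eα (Iso.refl _) (Iso.refl _)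
    (by simp [Triangle.mk, hαu, eα]) (by simp [Triangle.mk])
    (by simp [Triangle.mk, ← Functor.map_comp]))

end CategoryTheory.Pretriangulated

namespace CategoryTheory

section ShiftStable

variable {D : Type*} [Category D] [HasShift D ℤ] (S : D → Prop)

lemma prop_shift_shift_iff (hS : ∀ {X Y : D}, (X ≅ Y) → S X → S Y) (X : D) {a b c : ℤ}
    (h : a + b = c) : S (X⟦a⟧⟦b⟧) ↔ S (X⟦c⟧) :=
  ⟨hS ((shiftFunctorAdd' D a b c h).app X).symm, hS ((shiftFunctorAdd' D a b c h).app X)⟩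

lemma prop_shift_zero_iff (hS : ∀ {X Y : D}, (X ≅ Y) → S X → S Y) (X : D) :
    S (X⟦(0 : ℤ)⟧) ↔ S X :=
  ⟨hS ((shiftFunctorZero D ℤ).app X), hS ((shiftFunctorZero D ℤ).app X).symm⟩

lemma prop_shift_of_le (hS : ∀ {X Y : D}, (X ≅ Y) → S X → S Y)
    (hS₁ : ∀ X : D, S X → S (X⟦(1 : ℤ)⟧)) {X : D} {a b : ℤ} (hab : a ≤ b) (h : S (X⟦a⟧)) :
    S (X⟦b⟧) := by
  induction b, hab using Int.leInduction with
  | base => exact h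
  | succ b _ ih => exact (prop_shift_shift_iff S hS X rfl).1 (hS₁ _ ih)

lemma prop_shift_of_ge (hS : ∀ {X Y : D}, (X ≅ Y) → S X → S Y)
    (hS₁ : ∀ X : D, S X → S (X⟦(-1 : ℤ)⟧)) {X : D} {a b : ℤ} (hab : a ≤ b) (h : S (X⟦b⟧)) :
    S (X⟦a⟧) := by
  induction a, hab using Int.leInductionDown with
  | base => exact h
  | pred a _ ih => exact (prop_shift_shift_iff S hS X (sub_eq_add_neg a 1).symm).1 (hS₁ _ ih)

end ShiftStable

section TStructure

variable {D : Type*} [Category D] [Preadditive D] [HasShift D ℤ]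
  [∀ n : ℤ, (shiftFunctor D n).Additive] (P Q : D → Prop)

lemma hom_eq_zero_of_prop_shift (hQiso : ∀ {X Y : D}, (X ≅ Y) → Q X → Q Y)
    (hvanish : ∀ (X Y : D), P X → Q (Y⟦(1 : ℤ)⟧) → ∀ f : X ⟶ Y, f = 0)
    {X Y : D} (k : ℤ) (hX : P (X⟦k⟧)) (hY : Q (Y⟦k + 1⟧)) (g : X ⟶ Y) : g = 0 := by
  apply (shiftFunctor D k).map_injective
  rw [Functor.map_zero]
  exact hvanish _ _ hX ((prop_shift_shift_iff Q hQiso Y rfl).2 hY) _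

variable [HasZeroObject D] [Pretriangulated D]

def HasTruncation (X : D) : Prop :=
  ∃ (A B : D) (f : A ⟶ X) (g : X ⟶ B) (h : B ⟶ A⟦(1 : ℤ)⟧),
    Triangle.mk f g h ∈ distTriang D ∧ P A ∧ Q (B⟦(1 : ℤ)⟧)

lemma exists_distTriang_of_prop_shift (hPiso : ∀ {X Y : D}, (X ≅ Y) → P X → P Y)
    (hQiso : ∀ {X Y : D}, (X ≅ Y) → Q X → Q Y)
    (htrunc : ∀ X : D, P X → ∃ (X₀ : D) (g : X ⟶ X₀) (F : D) (f : F ⟶ X)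
        (h : X₀ ⟶ F⟦(1 : ℤ)⟧),
        P X₀ ∧ Q X₀ ∧ Triangle.mk f g h ∈ (distTriang D) ∧ P (F⟦(-1 : ℤ)⟧))
    (k : ℤ) (X : D) (hX : P (X⟦k⟧)) :
    ∃ (F Y : D) (f : F ⟶ X) (g : X ⟶ Y) (h : Y ⟶ F⟦(1 : ℤ)⟧),
      Triangle.mk f g h ∈ distTriang D ∧ P (F⟦k - 1⟧) ∧ Q (Y⟦k⟧) := by
  obtain ⟨Y, g, F, f, h, -, hY, hT, hF⟩ := htrunc _ hX
  refine ⟨F⟦-k⟧, Y⟦-k⟧, _, _, _, distTriang_of_iso₂ _ (Triangle.shift_distinguished _ hT (-k))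
    ((shiftFunctorCompIsoId D k (-k) (add_neg_cancel k)).app X), ?_, ?_⟩
  · exact (prop_shift_shift_iff P hPiso F (by ring)).2 hF
  · exact (prop_shift_shift_iff Q hQiso Y (neg_add_cancel k)).2
      ((prop_shift_zero_iff Q hQiso Y).2 hY)

lemma hasTruncation_of_prop_shift (hPiso : ∀ {X Y : D}, (X ≅ Y) → P X → P Y)
    (hQiso : ∀ {X Y : D}, (X ≅ Y) → Q X → Q Y)
    (hPshift : ∀ X : D, P X → P (X⟦(1 : ℤ)⟧))
    (hQshift : ∀ X : D, Q X → Q (X⟦(-1 : ℤ)⟧))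
    (hQext : ∀ T : Triangle D, T ∈ (distTriang D) → Q T.obj₁ → Q T.obj₃ → Q T.obj₂)
    (hvanish : ∀ (X Y : D), P X → Q (Y⟦(1 : ℤ)⟧) → ∀ f : X ⟶ Y, f = 0)
    (htrunc : ∀ X : D, P X → ∃ (X₀ : D) (g : X ⟶ X₀) (F : D) (f : F ⟶ X)
        (h : X₀ ⟶ F⟦(1 : ℤ)⟧),
        P X₀ ∧ Q X₀ ∧ Triangle.mk f g h ∈ (distTriang D) ∧ P (F⟦(-1 : ℤ)⟧))
    {k : ℤ} (hk : 1 ≤ k) (X : D) (hX : P (X⟦k⟧)) : HasTruncation P Q X := by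
  induction k, hk using Int.leInduction generalizing X with
  | base =>
    obtain ⟨F, Y, f, g, h, hT, hF, hY⟩ :=
      exists_distTriang_of_prop_shift P Q hPiso hQiso htrunc 1 X hX
    exact ⟨F, Y, f, g, h, hT, (prop_shift_zero_iff P hPiso F).1 hF, hY⟩
  | succ k hk ih =>
    obtain ⟨F, Y, f, g, h, hT, hF, hY⟩ :=
      exists_distTriang_of_prop_shift P Q hPiso hQiso htrunc (k + 1) X hX
    rw [add_sub_cancel_right] at hF
    obtain ⟨A, B, a, p, r, h₁, hA, hB⟩ := ih F hF
    have hQY : ∀ n ≤ k + 2, Q (Y⟦(-1 : ℤ)⟧⟦n⟧) := fun n hn ↦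
      (prop_shift_shift_iff Q hQiso Y (neg_add_eq_sub 1 n)).2
        (prop_shift_of_ge Q hQiso hQshift (by omega) hY)
    obtain ⟨E, v, δ, _, _, _, hAXE, hBEY⟩ :=
      exists_distTriang_comp_of_hom_eq_zero h₁ (inv_rot_of_distTriang _ hT)
        (hvanish _ _ hA (hQY 1 (by omega))) (hvanish _ _ (hPshift _ hA) hB)
        (hom_eq_zero_of_prop_shift P Q hQiso hvanish k hF (hQY (k + 1) (by omega)))
    refine ⟨A, E, a ≫ f, v, δ, hAXE, hA, ?_⟩
    exact hQext _ (Triangle.shift_distinguished _ hBEY 1) hB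
      ((prop_shift_shift_iff Q hQiso _ one_add_one_eq_two).2 (hQY 2 (by omega)))

end TStructure

end CategoryTheory

/-- Recognition criterion for t-structures (Proposition 3.5 of the paper).

Let `𝒟` be a triangulated category with full subcategories `𝒟^{≥0}`, `𝒟^{≤0}` closed
under isomorphisms, encoded by predicates `P` (`X ∈ 𝒟^{≥0}` iff `P X`) and `Q`
(`X ∈ 𝒟^{≤0}` iff `Q X`); then `X ∈ 𝒟^{≥n}` iff `P (X⟦-n⟧)` and `X ∈ 𝒟^{≤n}` iff
`Q (X⟦-n⟧)`. Assume:
(1) `𝒟^{≥0}` is closed under extensions and `[1]`, and `𝒟^{≤0}` under extensions and `[-1]`;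
(2) every object lies in some `𝒟^{≥n}`;
(3) `Hom(X, Y) = 0` for `X ∈ 𝒟^{≥0}` and `Y ∈ 𝒟^{≤−1}` (i.e. `Q (Y⟦1⟧)`);
(4) every `X ∈ 𝒟^{≥0}` admits a map `X → X₀` with `X₀ ∈ 𝒟^{≥0} ∩ 𝒟^{≤0}` whose fiber
lies in `𝒟^{≥1}`.
Then `(𝒟^{≥0}, 𝒟^{≤0})` is a t-structure: the Hom-vanishing and shift-inclusion axioms
hold, and every object `X` fits into a distinguished triangle
`X_{≥0} → X → X_{≤−1} → X_{≥0}[1]` with `X_{≥0} ∈ 𝒟^{≥0}` and `X_{≤−1} ∈ 𝒟^{≤−1}`. -/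
theorem stmt12 (D : Type*) [Category D] [Preadditive D] [HasZeroObject D]
    [HasShift D ℤ] [∀ n : ℤ, (shiftFunctor D n).Additive] [Pretriangulated D]
    (P Q : D → Prop)
    (hPiso : ∀ {X Y : D}, (X ≅ Y) → P X → P Y)
    (hQiso : ∀ {X Y : D}, (X ≅ Y) → Q X → Q Y)
    -- (1) closure under shifts and extensions
    (hPshift : ∀ X : D, P X → P (X⟦(1 : ℤ)⟧))
    (hQshift : ∀ X : D, Q X → Q (X⟦(-1 : ℤ)⟧))
    (hPext : ∀ T : Triangle D, T ∈ (distTriang D) → P T.obj₁ → P T.obj₃ → P T.obj₂)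
    (hQext : ∀ T : Triangle D, T ∈ (distTriang D) → Q T.obj₁ → Q T.obj₃ → Q T.obj₂)
    -- (2) every object is bounded below
    (hbound : ∀ X : D, ∃ n : ℤ, P (X⟦-n⟧))
    -- (3) Hom-vanishing
    (hvanish : ∀ (X Y : D), P X → Q (Y⟦(1 : ℤ)⟧) → ∀ f : X ⟶ Y, f = 0)
    -- (4) truncation of nonnegative objects
    (htrunc : ∀ X : D, P X → ∃ (X₀ : D) (g : X ⟶ X₀) (F : D) (f : F ⟶ X)
        (h : X₀ ⟶ F⟦(1 : ℤ)⟧),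
        P X₀ ∧ Q X₀ ∧ Triangle.mk f g h ∈ (distTriang D) ∧ P (F⟦(-1 : ℤ)⟧)) :
    -- conclusion: the pair `(P, Q)` defines a t-structure
    (∀ (X Y : D), P X → Q (Y⟦(1 : ℤ)⟧) → ∀ f : X ⟶ Y, f = 0) ∧
    (∀ X : D, P X → P (X⟦(1 : ℤ)⟧)) ∧
    (∀ X : D, Q X → Q (X⟦(-1 : ℤ)⟧)) ∧
    (∀ X : D, ∃ (A B : D) (f : A ⟶ X) (g : X ⟶ B) (h : B ⟶ A⟦(1 : ℤ)⟧),
        Triangle.mk f g h ∈ (distTriang D) ∧ P A ∧ Q (B⟦(1 : ℤ)⟧)) := by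
  refine ⟨hvanish, hPshift, hQshift, fun X ↦ ?_⟩
  obtain ⟨n, hn⟩ := hbound X
  exact hasTruncation_of_prop_shift P Q hPiso hQiso hPshift hQshift hQext hvanish htrunc
    (le_max_right (-n) 1) X (prop_shift_of_le P hPiso hPshift (le_max_left _ _) hn)
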